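/- arXiv:1507.08597 — 6 statements merged into one kernel-verified Lean document; each statement's English description precedes it below -/
import Mathlib

section
/- With the prefix order ≤ on B_n and the relation x ⪯ z meaning x ≤ z ≤ xΔ: if x ≤ y ≤ z and x ⪯ z, then x ⪯ y and y ⪯ z. -/
/-- The defining relations of the braid group `B_n` on generators `s_0, …, s_{n-2}`
(0-indexed versions of the standard generators `s_1, …, s_{n-1}`). -/
def braidRels (n : ℕ) : Set (FreeGroup (Fin (n - 1))) :=
  {r | (∃ i j : Fin (n - 1), (i : ℕ) + 1 = (j : ℕ) ∧
          r = FreeGroup.of i * FreeGroup.of j * FreeGroup.of i *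
              (FreeGroup.of j * FreeGroup.of i * FreeGroup.of j)⁻¹) ∨
       (∃ i j : Fin (n - 1), (i : ℕ) + 1 < (j : ℕ) ∧
          r = FreeGroup.of i * FreeGroup.of j * (FreeGroup.of j * FreeGroup.of i)⁻¹)}

/-- The braid group `B_n`, given by the standard presentation. -/
abbrev BraidGroup (n : ℕ) := PresentedGroup (braidRels n)

/-- The standard generator `s_{i+1}` (1-indexed) of `B_n`. -/
def sgen (n : ℕ) (i : Fin (n - 1)) : BraidGroup n := PresentedGroup.of i

/-- The positive braid monoid `B_n^+`: the submonoid generated by the standard generators. -/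
def posMonoid (n : ℕ) : Submonoid (BraidGroup n) := Submonoid.closure (Set.range (sgen n))

/-- The prefix order on `B_n` : `x ≤ y` iff `x⁻¹ * y` is a positive braid. -/
def braidLe (n : ℕ) (x y : BraidGroup n) : Prop := x⁻¹ * y ∈ posMonoid n

/-- The standard generator of `B_n` indexed by a natural number (`s_{i+1}` in 1-indexed
notation), or `1` if the index is out of range. -/
def sgen' (n : ℕ) (i : ℕ) : BraidGroup n :=
  if h : i < n - 1 then sgen n ⟨i, h⟩ else 1

/-- The half twist `Δ = (s_1 ⋯ s_{n-1})(s_1 ⋯ s_{n-2}) ⋯ (s_1 s_2)(s_1)` in `B_n`. -/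
def halfTwist (n : ℕ) : BraidGroup n :=
  (((List.range (n - 1)).reverse).map
    (fun m => ((List.range (m + 1)).map (sgen' n)).prod)).prod

/-- The relation `x ⪯ y`, meaning `x ≤ y ≤ xΔ` in the prefix order. -/
def braidPrec (n : ℕ) (x y : BraidGroup n) : Prop :=
  braidLe n x y ∧ braidLe n y (x * halfTwist n)

/-! ### Auxiliary development -/

lemma relator_eq_one (n : ℕ) {r : FreeGroup (Fin (n-1))} (hr : r ∈ braidRels n) :
    PresentedGroup.mk (braidRels n) r = 1 :=
  (QuotientGroup.eq_one_iff r).2 (Subgroup.subset_normalClosure hr)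

lemma rel_braid (n : ℕ) (i : ℕ) (h : i + 1 < n - 1) :
    sgen' n i * sgen' n (i+1) * sgen' n i = sgen' n (i+1) * sgen' n i * sgen' n (i+1) := by
  have hi : i < n - 1 := by omega
  have key := relator_eq_one n (r :=
    FreeGroup.of (⟨i, hi⟩ : Fin (n-1)) * FreeGroup.of (⟨i+1, h⟩ : Fin (n-1)) *
      FreeGroup.of ⟨i, hi⟩ *
      (FreeGroup.of (⟨i+1, h⟩ : Fin (n-1)) * FreeGroup.of ⟨i, hi⟩ * FreeGroup.of ⟨i+1, h⟩)⁻¹)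
    (Or.inl ⟨⟨i, hi⟩, ⟨i+1, h⟩, rfl, rfl⟩)
  simp only [map_mul, map_inv] at key
  have := mul_inv_eq_one.mp key
  simpa [sgen', hi, h, sgen, PresentedGroup.of] using this

lemma rel_comm (n : ℕ) (i j : ℕ) (h : i + 2 ≤ j) :
    sgen' n i * sgen' n j = sgen' n j * sgen' n i := by
  by_cases hj : j < n - 1
  · have hi : i < n - 1 := by omega
    have key := relator_eq_one n (r :=
      FreeGroup.of (⟨i, hi⟩ : Fin (n-1)) * FreeGroup.of (⟨j, hj⟩ : Fin (n-1)) *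
        (FreeGroup.of (⟨j, hj⟩ : Fin (n-1)) * FreeGroup.of ⟨i, hi⟩)⁻¹)
      (Or.inr ⟨⟨i, hi⟩, ⟨j, hj⟩, by simp; omega, rfl⟩)
    simp only [map_mul, map_inv] at key
    have := mul_inv_eq_one.mp key
    simpa [sgen', hi, hj, sgen, PresentedGroup.of] using this
  · by_cases hi : i < n - 1 <;> simp [sgen', hi, hj]

/-- `Cw n k = s_0 s_1 ⋯ s_{k-1}` (0-indexed generators). -/
def Cw (n k : ℕ) : BraidGroup n := ((List.range k).map (sgen' n)).prod

/-- `Rw n k = s_{k-1} ⋯ s_1 s_0`. -/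
def Rw (n k : ℕ) : BraidGroup n := ((List.range k).reverse.map (sgen' n)).prod

/-- `Dw n k = Cw k * Cw (k-1) * ⋯ * Cw 1`. -/
def Dw (n : ℕ) : ℕ → BraidGroup n
  | 0 => 1
  | (k+1) => Cw n (k+1) * Dw n k

lemma Cw_succ (n k : ℕ) : Cw n (k+1) = Cw n k * sgen' n k := by
  simp [Cw, List.range_succ]

lemma Rw_succ (n k : ℕ) : Rw n (k+1) = sgen' n k * Rw n k := by
  simp [Rw, List.range_succ]

lemma halfTwist_eq (n : ℕ) : halfTwist n = Dw n (n-1) := by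
  suffices h : ∀ k, (((List.range k).reverse).map
      (fun m => ((List.range (m + 1)).map (sgen' n)).prod)).prod = Dw n k from h (n-1)
  intro k
  induction k with
  | zero => simp [Dw]
  | succ k ih => simp [List.range_succ, Dw, ← ih, Cw]

lemma comm_Cw (n m j : ℕ) (h : m + 1 ≤ j) : Cw n m * sgen' n j = sgen' n j * Cw n m := by
  induction m with
  | zero => simp [Cw]
  | succ m ih =>
    rw [Cw_succ, mul_assoc, rel_comm n m j (by omega), ← mul_assoc, ih (by omega), mul_assoc]

lemma comm_Rw (n m j : ℕ) (h : m + 1 ≤ j) : Rw n m * sgen' n j = sgen' n j * Rw n m := by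
  induction m with
  | zero => simp [Rw]
  | succ m ih =>
    rw [Rw_succ, mul_assoc, ih (by omega), ← mul_assoc, rel_comm n m j (by omega), mul_assoc]

lemma comm_Dw (n m j : ℕ) (h : m + 1 ≤ j) : Dw n m * sgen' n j = sgen' n j * Dw n m := by
  induction m with
  | zero => simp [Dw]
  | succ m ih =>
    rw [Dw, mul_assoc, ih (by omega), ← mul_assoc, comm_Cw n (m+1) j h, mul_assoc]

lemma crawl_Cw (n : ℕ) : ∀ k, k ≤ n - 1 → ∀ i, i + 2 ≤ k →
    Cw n k * sgen' n i = sgen' n (i+1) * Cw n k := by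
  intro k
  induction k with
  | zero => intro _ i hi; omega
  | succ k ih =>
    intro hk i hi
    rcases Nat.lt_or_ge (i+2) (k+1) with hlt | hge
    · rw [Cw_succ, mul_assoc, ← rel_comm n i k (by omega), ← mul_assoc,
        ih (by omega) i (by omega), mul_assoc]
    · have hik : k = i + 1 := by omega
      subst hik
      calc Cw n (i+2) * sgen' n i
          = Cw n i * (sgen' n i * sgen' n (i+1) * sgen' n i) := by
            rw [Cw_succ, Cw_succ]; group
        _ = Cw n i * (sgen' n (i+1) * sgen' n i * sgen' n (i+1)) := by
            rw [rel_braid n i (by omega)]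
        _ = (Cw n i * sgen' n (i+1)) * (sgen' n i * sgen' n (i+1)) := by group
        _ = (sgen' n (i+1) * Cw n i) * (sgen' n i * sgen' n (i+1)) := by
            rw [comm_Cw n i (i+1) (by omega)]
        _ = sgen' n (i+1) * Cw n (i+2) := by rw [Cw_succ, Cw_succ]; group

lemma Dw_eq_Dw_Rw (n : ℕ) : ∀ k, Dw n (k+1) = Dw n k * Rw n (k+1) := by
  intro k
  induction k with
  | zero => simp [Dw, Cw, Rw, List.range_succ]
  | succ k ih =>
    calc Dw n (k+1+1)
        = Cw n (k+1) * sgen' n (k+1) * Dw n (k+1) := by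
          rw [show Dw n (k+1+1) = Cw n (k+1+1) * Dw n (k+1) from rfl, Cw_succ]
      _ = Cw n (k+1) * sgen' n (k+1) * (Dw n k * Rw n (k+1)) := by rw [← ih]
      _ = Cw n (k+1) * ((sgen' n (k+1) * Dw n k) * Rw n (k+1)) := by group
      _ = Cw n (k+1) * ((Dw n k * sgen' n (k+1)) * Rw n (k+1)) := by
          rw [comm_Dw n k (k+1) (by omega)]
      _ = (Cw n (k+1) * Dw n k) * (sgen' n (k+1) * Rw n (k+1)) := by group
      _ = Dw n (k+1) * Rw n (k+1+1) := by rw [← Rw_succ]; rfl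

lemma key_Dw (n : ℕ) : ∀ k, k ≤ n - 1 → ∀ i, i + 1 ≤ k →
    sgen' n i * Dw n k = Dw n k * sgen' n (k - 1 - i) := by
  intro k
  induction k with
  | zero => intro _ i hi; omega
  | succ k ih =>
    intro hk i hi
    rcases Nat.eq_zero_or_pos i with hi0 | hipos
    · subst hi0
      rcases Nat.eq_zero_or_pos k with hk0 | hkpos
      · subst hk0
        simp [Dw, Cw, List.range_succ]
      · obtain ⟨m, rfl⟩ : ∃ m, k = m + 1 := ⟨k-1, by omega⟩
        have hr : sgen' n m * Rw n (m+2) = Rw n (m+2) * sgen' n (m+1) := by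
          calc sgen' n m * Rw n (m+2)
              = sgen' n m * (sgen' n (m+1) * (sgen' n m * Rw n m)) := by
                rw [Rw_succ, Rw_succ]
            _ = (sgen' n m * sgen' n (m+1) * sgen' n m) * Rw n m := by group
            _ = (sgen' n (m+1) * sgen' n m * sgen' n (m+1)) * Rw n m := by
                rw [rel_braid n m (by omega)]
            _ = sgen' n (m+1) * sgen' n m * (sgen' n (m+1) * Rw n m) := by group
            _ = sgen' n (m+1) * sgen' n m * (Rw n m * sgen' n (m+1)) := by
                rw [comm_Rw n m (m+1) (by omega)]
            _ = Rw n (m+2) * sgen' n (m+1) := by rw [Rw_succ, Rw_succ]; group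
        calc sgen' n 0 * Dw n (m+2)
            = sgen' n 0 * Dw n (m+1) * Rw n (m+2) := by rw [Dw_eq_Dw_Rw]; group
          _ = Dw n (m+1) * sgen' n (m+1-1-0) * Rw n (m+2) := by
              rw [ih (by omega) 0 (by omega)]
          _ = Dw n (m+1) * (sgen' n m * Rw n (m+2)) := by
              rw [show m+1-1-0 = m by omega]; group
          _ = Dw n (m+1) * (Rw n (m+2) * sgen' n (m+1)) := by rw [hr]
          _ = Dw n (m+2) * sgen' n (m+1+1-1-0) := by
              rw [Dw_eq_Dw_Rw n (m+1), show m+1+1-1-0 = m+1 by omega]; group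
    · obtain ⟨i', rfl⟩ : ∃ i', i = i' + 1 := ⟨i-1, by omega⟩
      calc sgen' n (i'+1) * Dw n (k+1)
          = (sgen' n (i'+1) * Cw n (k+1)) * Dw n k := by
            rw [show Dw n (k+1) = Cw n (k+1) * Dw n k from rfl]; group
        _ = (Cw n (k+1) * sgen' n i') * Dw n k := by
            rw [← crawl_Cw n (k+1) hk i' (by omega)]
        _ = Cw n (k+1) * (Dw n k * sgen' n (k-1-i')) := by
            rw [mul_assoc, ih (by omega) i' (by omega)]
        _ = Dw n (k+1) * sgen' n (k+1-1-(i'+1)) := by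
            rw [show k+1-1-(i'+1) = k-1-i' by omega,
              show Dw n (k+1) = Cw n (k+1) * Dw n k from rfl]; group

lemma sgen'_mem (n i : ℕ) : sgen' n i ∈ posMonoid n := by
  by_cases h : i < n - 1
  · simp only [sgen', dif_pos h]
    exact Submonoid.subset_closure ⟨⟨i, h⟩, rfl⟩
  · simp only [sgen', dif_neg h]
    exact one_mem _

lemma conj_halfTwist_mem (n : ℕ) {w : BraidGroup n} (hw : w ∈ posMonoid n) :
    (halfTwist n)⁻¹ * w * halfTwist n ∈ posMonoid n := by
  induction hw using Submonoid.closure_induction with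
  | mem x hx =>
    obtain ⟨i, rfl⟩ := hx
    have hi : (i : ℕ) + 1 ≤ n - 1 := i.2
    have hs : sgen n i = sgen' n i := by simp [sgen', i.2]
    have := key_Dw n (n-1) le_rfl i (by omega)
    rw [← halfTwist_eq] at this
    have h2 : (halfTwist n)⁻¹ * sgen' n i * halfTwist n = sgen' n (n-1-1-i) := by
      rw [mul_assoc, this]; group
    rw [hs, h2]
    exact sgen'_mem n _
  | one => simpa using one_mem _
  | mul x y _ _ hx hy =>
    have : (halfTwist n)⁻¹ * (x * y) * halfTwist n =
        ((halfTwist n)⁻¹ * x * halfTwist n) * ((halfTwist n)⁻¹ * y * halfTwist n) := by group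
    rw [this]; exact mul_mem hx hy

/-- if `x ≤ y ≤ z` and `x ⪯ z`, then `x ⪯ y` and `y ⪯ z`. -/
theorem braidPrec_cotrans (n : ℕ) (x y z : BraidGroup n)
    (hxy : braidLe n x y) (hyz : braidLe n y z) (h : braidPrec n x z) :
    braidPrec n x y ∧ braidPrec n y z := by
  obtain ⟨hxz, hzxd⟩ := h
  constructor
  · refine ⟨hxy, ?_⟩
    have : y⁻¹ * (x * halfTwist n) = (y⁻¹ * z) * (z⁻¹ * (x * halfTwist n)) := by group
    rw [braidLe, this]
    exact mul_mem hyz hzxd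
  · refine ⟨hyz, ?_⟩
    have : z⁻¹ * (y * halfTwist n) =
        (z⁻¹ * (x * halfTwist n)) * ((halfTwist n)⁻¹ * (x⁻¹ * y) * halfTwist n) := by group
    rw [braidLe, this]
    exact mul_mem hzxd (conj_halfTwist_mem n hxy)
end

section
/- For 1 ≤ i < j ≤ n with (i,j) ≠ (1,n), the permutation σ₀ fixing 1,…,i−1 and j+1,…,n and reversing the interval {i,…,j} (i.e., σ₀ sends k to i+j−k for i ≤ k ≤ j) is an upper bound in the weak Bruhat order for every minimal element of the set Rev_n(i,j) = {σ ∈ S_n \ {id, w_0} : (i)σ > (j)σ}, and σ₀ itself lies in Rev_n(i,j). -/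
/-- The weak Bruhat order on the symmetric group on `{0, …, n-1}`. -/
def weakBruhat (n : ℕ) (σ τ : Equiv.Perm (Fin n)) : Prop :=
  ∀ i j : Fin n, i < j → σ j < σ i → τ j < τ i

/-- The set `Rev_n(i,j)`: permutations other than the identity and the longest element `w₀`
that invert the pair `(i,j)`. -/
def revSet (n : ℕ) (i j : Fin n) : Set (Equiv.Perm (Fin n)) :=
  {σ | σ ≠ 1 ∧ σ ≠ Fin.revPerm ∧ σ j < σ i}

/-- `σ` is a minimal element of `Rev_n(i,j)` in the induced weak Bruhat order. -/
def minimalInRev (n : ℕ) (i j : Fin n) (σ : Equiv.Perm (Fin n)) : Prop :=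
  σ ∈ revSet n i j ∧ ∀ τ ∈ revSet n i j, weakBruhat n τ σ → τ = σ

/-- The map reversing the interval `{i, …, j}` of `Fin n` and fixing everything else. -/
def revIntFun (n : ℕ) (i j : Fin n) (k : Fin n) : Fin n :=
  if h : (i : ℕ) ≤ (k : ℕ) ∧ (k : ℕ) ≤ (j : ℕ) then
    ⟨(i : ℕ) + (j : ℕ) - (k : ℕ), by have := j.isLt; omega⟩
  else k

theorem revIntFun_involutive (n : ℕ) (i j : Fin n) :
    Function.Involutive (revIntFun n i j) := by
  intro k
  unfold revIntFun
  by_cases h : (i : ℕ) ≤ (k : ℕ) ∧ (k : ℕ) ≤ (j : ℕ)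
  · rw [dif_pos h]
    have hj := j.isLt
    rw [dif_pos (by simp; omega)]
    exact Fin.ext (by simp; omega)
  · rw [dif_neg h, dif_neg h]

/-- The permutation `σ₀` fixing everything outside `{i, …, j}` and sending `k ↦ i+j-k`
for `i ≤ k ≤ j`. -/
def intervalRev (n : ℕ) (i j : Fin n) : Equiv.Perm (Fin n) :=
  (revIntFun_involutive n i j).toPerm

/-!
If `a ⋖ b` are adjacent values with `σ⁻¹ b < σ⁻¹ a` and `(a, b) ≠ (σ j, σ i)`, then
`swap a b * σ` lies strictly below `σ` in the weak order and still belongs to `Rev_n(i,j)`.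
So for a minimal `σ` the only descent of `σ⁻¹` is at `σ j ⋖ σ i`, and `σ⁻¹` is increasing on the
values `≤ σ j` and on the values `≥ σ i`. An inversion `(a, b)` of `σ` must therefore have
`σ b ≤ σ j < σ i ≤ σ a`, whence `i ≤ a < b ≤ j`, and the interval reversal inverts every such pair.
-/

open Set Equiv

lemma Equiv.swap_apply_lt_swap_apply_of_covBy {α : Type*} [LinearOrder α] [DecidableEq α]
    {a b x y : α} (hab : a ⋖ b) (hxy : x < y) (hne : ¬(x = a ∧ y = b)) :
    swap a b x < swap a b y := by
  have hab' := hab.lt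
  rcases eq_or_ne x a with rfl | hxa
  · have hyb : b < y := lt_of_le_of_ne (hab.ge_of_gt hxy) (Ne.symm fun h => hne ⟨rfl, h⟩)
    rwa [swap_apply_left, swap_apply_of_ne_of_ne hxy.ne' hyb.ne']
  rcases eq_or_ne y b with rfl | hyb
  · have hxa' : x < a := lt_of_le_of_ne (hab.le_of_lt hxy) hxa
    rwa [swap_apply_right, swap_apply_of_ne_of_ne hxa (hxa'.trans hab').ne]
  rcases eq_or_ne x b with rfl | hxb
  · rw [swap_apply_right, swap_apply_of_ne_of_ne (hab'.trans hxy).ne' hyb]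
    exact hab'.trans hxy
  rcases eq_or_ne y a with rfl | hya
  · rw [swap_apply_left, swap_apply_of_ne_of_ne hxa hxb]
    exact hxy.trans hab'
  rwa [swap_apply_of_ne_of_ne hxa hxb, swap_apply_of_ne_of_ne hya hyb]

lemma strictMonoOn_of_covBy {α β : Type*} [PartialOrder α] [SuccOrder α] [IsSuccArchimedean α]
    [Preorder β] {s : Set α} {f : α → β} (hs : s.OrdConnected)
    (hf : ∀ a b, a ⋖ b → a ∈ s → b ∈ s → f a < f b) : StrictMonoOn f s :=
  strictMonoOn_of_lt_succ hs fun a ha => hf a _ (Order.covBy_succ_of_not_isMax ha)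

section intervalRev

variable {n : ℕ} {i j k : Fin n}

lemma intervalRev_apply_of_mem (hik : i ≤ k) (hkj : k ≤ j) :
    (intervalRev n i j k : ℕ) = i + j - k :=
  congrArg Fin.val (dif_pos ⟨hik, hkj⟩ : revIntFun n i j k = _)

lemma intervalRev_apply_of_not_mem (hk : ¬(i ≤ k ∧ k ≤ j)) : intervalRev n i j k = k := by
  rw [Fin.le_def, Fin.le_def] at hk
  exact dif_neg hk

lemma intervalRev_mem_revSet (hij : i < j) (hnot : ¬((i : ℕ) = 0 ∧ (j : ℕ) = n - 1)) :
    intervalRev n i j ∈ revSet n i j := by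
  have hi : (intervalRev n i j i : ℕ) = j := by
    rw [intervalRev_apply_of_mem le_rfl hij.le]; omega
  have hj : (intervalRev n i j j : ℕ) = i := by
    rw [intervalRev_apply_of_mem hij.le le_rfl]; omega
  refine ⟨fun h => ?_, fun h => ?_, Fin.lt_def.mpr (by rw [hi, hj]; exact hij)⟩
  · rw [h] at hi
    exact hij.ne (Fin.ext hi)
  · -- `σ₀` sends `0` to `j` if `i = 0` and fixes it otherwise, while `w₀` sends it to `n - 1`.
    let z : Fin n := ⟨0, by omega⟩
    have hz : (z : ℕ) = 0 := rfl
    have h0 : (intervalRev n i j z : ℕ) = n - 1 := by rw [h, Fin.revPerm_apply, Fin.val_rev, hz]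
    by_cases hi0 : (i : ℕ) = 0
    · rw [intervalRev_apply_of_mem (Fin.le_def.mpr (by omega)) (Fin.le_def.mpr (by omega))] at h0
      omega
    · rw [intervalRev_apply_of_not_mem (by simp only [Fin.le_def]; omega)] at h0
      omega

lemma intervalRev_lt_intervalRev {a b : Fin n} (hia : i ≤ a) (hab : a < b) (hbj : b ≤ j) :
    intervalRev n i j b < intervalRev n i j a := by
  rw [Fin.lt_def, intervalRev_apply_of_mem (hia.trans hab.le) hbj,
    intervalRev_apply_of_mem hia (hab.le.trans hbj)]
  simp only [Fin.le_def, Fin.lt_def] at *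
  omega

end intervalRev

lemma weakBruhat_swap_mul_of_covBy {n : ℕ} {σ : Perm (Fin n)} {a b : Fin n} (hab : a ⋖ b)
    (hdesc : σ⁻¹ b < σ⁻¹ a) : weakBruhat n (swap a b * σ) σ := by
  intro p q hpq hτ
  by_contra! hσ
  have hσ' : σ p < σ q := lt_of_le_of_ne hσ (σ.injective.ne hpq.ne)
  by_cases hpair : σ p = a ∧ σ q = b
  · rw [← hpair.1, ← hpair.2, Perm.coe_inv, symm_apply_apply, symm_apply_apply] at hdesc
    exact hdesc.not_gt hpq
  · exact hτ.not_gt (swap_apply_lt_swap_apply_of_covBy hab hσ' hpair)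

namespace minimalInRev

variable {n : ℕ} {i j : Fin n} {σ : Perm (Fin n)}

lemma eq_of_covBy_of_inv_lt (hσ : minimalInRev n i j σ) (hij : i < j) {a b : Fin n}
    (hab : a ⋖ b) (hdesc : σ⁻¹ b < σ⁻¹ a) : a = σ j ∧ b = σ i := by
  obtain ⟨⟨-, -, hσij⟩, hmin⟩ := hσ
  by_contra hpair
  have hτ_apply_a : (swap a b * σ) (σ⁻¹ a) = b := by simp
  have hτ_apply_b : (swap a b * σ) (σ⁻¹ b) = a := by simp
  have hτij : (swap a b * σ) j < (swap a b * σ) i :=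
    swap_apply_lt_swap_apply_of_covBy hab hσij fun h => hpair ⟨h.1.symm, h.2.symm⟩
  have hτ_mem : swap a b * σ ∈ revSet n i j := by
    refine ⟨fun h => ?_, fun h => ?_, hτij⟩
    · rw [h] at hτij
      exact hτij.not_gt hij
    · have hlt : (swap a b * σ) (σ⁻¹ b) < (swap a b * σ) (σ⁻¹ a) := by
        rw [hτ_apply_a, hτ_apply_b]; exact hab.lt
      rw [h, Fin.revPerm_apply, Fin.revPerm_apply, Fin.rev_lt_rev] at hlt
      exact hlt.not_gt hdesc
  have hτσ := hmin _ hτ_mem (weakBruhat_swap_mul_of_covBy hab hdesc)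
  rw [hτσ, Perm.coe_inv, apply_symm_apply] at hτ_apply_a
  exact hab.lt.ne hτ_apply_a

lemma covBy (hσ : minimalInRev n i j σ) (hij : i < j) : σ j ⋖ σ i := by
  by_contra hcov
  have hmono : StrictMono ⇑σ⁻¹ := by
    refine strictMono_of_lt_succ fun a ha => ?_
    have hcov_a := Order.covBy_succ_of_not_isMax ha
    refine lt_of_not_ge fun hle => ?_
    obtain ⟨rfl, hsucc⟩ := hσ.eq_of_covBy_of_inv_lt hij hcov_a
      (lt_of_le_of_ne hle ((σ⁻¹).injective.ne hcov_a.lt.ne'))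
    exact hcov (hsucc ▸ hcov_a)
  have := hmono hσ.1.2.2
  rw [Perm.coe_inv, symm_apply_apply, symm_apply_apply] at this
  exact this.not_gt hij

lemma inv_lt_inv_of_covBy (hσ : minimalInRev n i j σ) (hij : i < j) {a b : Fin n}
    (hab : a ⋖ b) (ha : a ≠ σ j) : σ⁻¹ a < σ⁻¹ b :=
  lt_of_not_ge fun hle => ha (hσ.eq_of_covBy_of_inv_lt hij hab
    (lt_of_le_of_ne hle ((σ⁻¹).injective.ne hab.lt.ne'))).1

lemma mem_Icc_of_inversion (hσ : minimalInRev n i j σ) (hij : i < j) {a b : Fin n}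
    (hab : a < b) (hinv : σ b < σ a) : i ≤ a ∧ b ≤ j := by
  have hlow : StrictMonoOn ⇑σ⁻¹ (Iic (σ j)) := strictMonoOn_of_covBy ordConnected_Iic
    fun x y hxy _ hy => hσ.inv_lt_inv_of_covBy hij hxy (hxy.lt.trans_le hy).ne
  have hhigh : StrictMonoOn ⇑σ⁻¹ (Ioi (σ j)) := strictMonoOn_of_covBy ordConnected_Ioi
    fun x y hxy hx _ => hσ.inv_lt_inv_of_covBy hij hxy (ne_of_gt hx)
  have hb : σ b ≤ σ j := by
    refine le_of_not_gt fun hb => hab.not_gt ?_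
    simpa using hhigh hb (hb.trans hinv) hinv
  have ha : σ j < σ a := by
    refine lt_of_not_ge fun ha => hab.not_gt ?_
    simpa using hlow (hinv.le.trans ha) ha hinv
  constructor
  · simpa using (hhigh.le_iff_le (hσ.1.2.2 : σ j < σ i) ha).mpr ((hσ.covBy hij).ge_of_gt ha)
  · simpa using (hlow.le_iff_le hb (le_refl (σ j))).mpr hb

end minimalInRev

/-- for `i < j` with `(i,j) ≠ (1,n)` (0-indexed: `(i,j) ≠ (0,n-1)`), the
interval-reversing permutation `σ₀` lies in `Rev_n(i,j)` and is an upper bound, in the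
weak Bruhat order, for every minimal element of `Rev_n(i,j)`. -/
theorem intervalRev_upper_bound (n : ℕ) (i j : Fin n) (hij : i < j)
    (hnot : ¬((i : ℕ) = 0 ∧ (j : ℕ) = n - 1)) :
    intervalRev n i j ∈ revSet n i j ∧
    ∀ σ : Equiv.Perm (Fin n), minimalInRev n i j σ → weakBruhat n σ (intervalRev n i j) := by
  refine ⟨intervalRev_mem_revSet hij hnot, fun σ hσ a b hab hinv => ?_⟩
  obtain ⟨hia, hbj⟩ := hσ.mem_Icc_of_inversion hij hab hinv
  exact intervalRev_lt_intervalRev hia hab hbj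
end

section
/- For n ≥ 3 and any 1 ≤ i ≤ n−1, the meet in the weak Bruhat lattice of the n−2 maximal proper elements {v_k : k ≠ i} (where v_k is the permutation inverting all pairs except (k,k+1)) is the permutation [i+1,…,n,1,…,i], i.e., the permutation whose inversion set is {(k,l) : k ≤ i < l}; in particular this meet inverts the pair (1,n). Moreover, the meet of all n−1 maximal proper elements is the identity. -/
/-- The maximal proper element `v_k` of the weak Bruhat order: the permutation inverting
every pair except the adjacent pair `(k, k+1)` (0-indexed), i.e. `w₀ ∘ (k, k+1)`. -/
def vmax (n : ℕ) (k : ℕ) (hk : k + 1 < n) : Equiv.Perm (Fin n) :=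
  Fin.revPerm * Equiv.swap ⟨k, by omega⟩ ⟨k + 1, hk⟩

/-! A permutation lies below `v_k` exactly when it does not invert the adjacent pair `(k, k+1)`,
and every inversion `(a, b)` of a permutation forces an adjacent inversion `(j, j+1)` with
`a ≤ j < b`. So the common lower bounds of `{v_k : k ≠ i}` are the permutations whose only
possible adjacent inversion is `(i, i+1)`, hence whose inversions all straddle `i`. The rotation
`a ↦ a + (n - 1 - i)` inverts precisely the pairs straddling `i`, so it is the greatest of them;
with no adjacent inversion at all, a permutation is increasing, hence the identity. -/

open Equiv

theorem Fin.exists_apply_succ_lt_of_apply_lt {α : Type*} [LinearOrder α] {n : ℕ} (f : Fin n → α)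
    {a b : Fin n} (hab : a < b) (hba : f b < f a) :
    ∃ j : ℕ, ∃ hj : j + 1 < n, (a : ℕ) ≤ j ∧ j < b ∧ f ⟨j + 1, hj⟩ < f ⟨j, by omega⟩ := by
  by_contra! hmono
  have hle : ∀ c : ℕ, (a : ℕ) ≤ c → ∀ hc : c < n, c ≤ b → f a ≤ f ⟨c, hc⟩ := by
    refine Nat.le_induction (fun _ _ => le_rfl) fun c hac ih hc hcb => ?_
    exact (ih (by omega) (by omega)).trans (hmono c hc hac (by omega))
  exact (hle b (Fin.le_def.mp hab.le) b.isLt le_rfl).not_gt hba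

theorem Equiv.Perm.eq_one_of_strictMono {n : ℕ} {τ : Perm (Fin n)} (hτ : StrictMono τ) :
    τ = 1 :=
  Equiv.ext fun x =>
    DFunLike.congr_fun (Subsingleton.elim (hτ.orderIsoOfSurjective τ τ.surjective)
      (OrderIso.refl _)) x

theorem Equiv.Perm.eq_one_of_forall_not_apply_succ_lt {n : ℕ} {τ : Perm (Fin n)}
    (hτ : ∀ j : ℕ, ∀ hj : j + 1 < n, ¬τ ⟨j + 1, hj⟩ < τ ⟨j, by omega⟩) : τ = 1 := by
  refine eq_one_of_strictMono fun a b hab => lt_of_not_ge fun hba => ?_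
  have hba : τ b < τ a := hba.lt_of_ne (τ.injective.ne hab.ne')
  obtain ⟨j, hj, -, -, hdesc⟩ := Fin.exists_apply_succ_lt_of_apply_lt τ hab hba
  exact hτ j hj hdesc

theorem vmax_lt_vmax_iff {n k : ℕ} (hk : k + 1 < n) {a b : Fin n} (hab : a < b) :
    vmax n k hk b < vmax n k hk a ↔ ¬((a : ℕ) = k ∧ (b : ℕ) = k + 1) := by
  rw [Fin.lt_def] at hab
  simp only [vmax, Perm.mul_apply, Fin.revPerm_apply, Fin.rev_lt_rev]
  simp only [swap_apply_def, Fin.lt_def, Fin.ext_iff, apply_ite Fin.val]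
  split_ifs <;> omega

theorem weakBruhat_vmax_iff {n k : ℕ} (hk : k + 1 < n) (τ : Perm (Fin n)) :
    weakBruhat n τ (vmax n k hk) ↔ ¬τ ⟨k + 1, hk⟩ < τ ⟨k, by omega⟩ := by
  constructor
  · intro hτ hdesc
    have := hτ _ _ (Fin.mk_lt_mk.mpr k.lt_succ_self) hdesc
    exact (vmax_lt_vmax_iff hk (Fin.mk_lt_mk.mpr k.lt_succ_self)).mp this ⟨rfl, rfl⟩
  · rintro hτ a b hab hinv
    refine (vmax_lt_vmax_iff hk hab).mpr ?_
    rintro ⟨rfl, hb⟩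
    obtain rfl : b = ⟨a + 1, hk⟩ := Fin.ext hb
    exact hτ hinv

def rotatePerm (n i : ℕ) (hi : i + 1 < n) : Perm (Fin n) :=
  haveI : NeZero n := ⟨by omega⟩
  Equiv.addRight ⟨n - 1 - i, by omega⟩

theorem rotatePerm_apply_val {n i : ℕ} (hi : i + 1 < n) (a : Fin n) :
    (rotatePerm n i hi a : ℕ) = if (a : ℕ) ≤ i then a + (n - 1 - i) else a - (i + 1) := by
  have hval : (rotatePerm n i hi a : ℕ) = (a + (n - 1 - i)) % n := by
    simp [rotatePerm, Fin.val_add]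
  rw [hval]
  split_ifs with ha
  · exact Nat.mod_eq_of_lt (by omega)
  · rw [show (a : ℕ) + (n - 1 - i) = a - (i + 1) + n by omega, Nat.add_mod_right,
      Nat.mod_eq_of_lt (by omega)]

theorem rotatePerm_lt_rotatePerm_iff {n i : ℕ} (hi : i + 1 < n) {a b : Fin n} (hab : a < b) :
    rotatePerm n i hi b < rotatePerm n i hi a ↔ (a : ℕ) ≤ i ∧ i < b := by
  rw [Fin.lt_def] at hab ⊢
  rw [rotatePerm_apply_val, rotatePerm_apply_val]
  split_ifs <;> omega

theorem weakBruhat_rotatePerm_of_forall_vmax {n i : ℕ} (hi : i + 1 < n) {τ : Perm (Fin n)}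
    (hτ : ∀ k : ℕ, ∀ hk : k + 1 < n, k ≠ i → weakBruhat n τ (vmax n k hk)) :
    weakBruhat n τ (rotatePerm n i hi) := by
  intro a b hab hinv
  obtain ⟨j, hj, haj, hjb, hdesc⟩ := Fin.exists_apply_succ_lt_of_apply_lt τ hab hinv
  obtain rfl : j = i := by
    by_contra hji
    exact (weakBruhat_vmax_iff hj τ).mp (hτ j hj hji) hdesc
  exact (rotatePerm_lt_rotatePerm_iff hi hab).mpr ⟨haj, hjb⟩

/-- for `n ≥ 3` and each `i`, the meet in the weak Bruhat lattice of the
`n-2` maximal proper elements `{v_k : k ≠ i}` is the cyclic-type permutation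
`[i+1,…,n,1,…,i]`, namely the permutation whose inversion set is `{(a,b) : a ≤ i < b}`
(0-indexed); in particular this meet inverts the pair `(1,n)` (0-indexed `(0,n-1)`).
Moreover the only common lower bound of all `n-1` maximal proper elements is the
identity (i.e. their meet is the identity). -/
theorem meet_of_maximals (n : ℕ) (i : ℕ) (hi : i + 1 < n) :
    (∃ c : Equiv.Perm (Fin n),
      (∀ a b : Fin n, a < b → (c b < c a ↔ ((a : ℕ) ≤ i ∧ i < (b : ℕ)))) ∧
      (∀ k : ℕ, ∀ hk : k + 1 < n, k ≠ i → weakBruhat n c (vmax n k hk)) ∧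
      (∀ τ : Equiv.Perm (Fin n),
        (∀ k : ℕ, ∀ hk : k + 1 < n, k ≠ i → weakBruhat n τ (vmax n k hk)) →
        weakBruhat n τ c) ∧
      c ⟨n - 1, by omega⟩ < c ⟨0, by omega⟩) ∧
    (∀ τ : Equiv.Perm (Fin n),
      (∀ k : ℕ, ∀ hk : k + 1 < n, weakBruhat n τ (vmax n k hk)) → τ = 1) := by
  refine ⟨⟨rotatePerm n i hi, fun a b => rotatePerm_lt_rotatePerm_iff hi, fun k hk hki => ?_,
    fun τ => weakBruhat_rotatePerm_of_forall_vmax hi, ?_⟩, fun τ hτ => ?_⟩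
  · rw [weakBruhat_vmax_iff, rotatePerm_lt_rotatePerm_iff hi (Fin.mk_lt_mk.mpr k.lt_succ_self)]
    dsimp only
    omega
  · rw [rotatePerm_lt_rotatePerm_iff hi (Fin.mk_lt_mk.mpr (by omega))]
    dsimp only
    omega
  · exact Perm.eq_one_of_forall_not_apply_succ_lt fun k hk =>
      (weakBruhat_vmax_iff hk τ).mp (hτ k hk)
end

section
/- The nerve of the covering of Rev_n(1,n) (for n ≥ 3) by the stars of the n−1 maximal vertices v_1,…,v_{n-1} is the boundary of an (n−2)-simplex: every proper subset of {v_1,…,v_{n-1}} has a common lower bound in Rev_n(1,n), but the full set does not. -/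
/-- The set `Rev_n(1,n)` (0-indexed `Rev_n(0,n-1)`): permutations other than the identity
and `w₀` that invert the pair of the first and last positions. -/
def revSetFirstLast (n : ℕ) (hn : 1 ≤ n) : Set (Equiv.Perm (Fin n)) :=
  {σ | σ ≠ 1 ∧ σ ≠ Fin.revPerm ∧ σ ⟨n - 1, by omega⟩ < σ ⟨0, by omega⟩}

/-- the nerve of the covering of `Rev_n(1,n)` by the stars of the `n-1`
maximal vertices `v_1, …, v_{n-1}` is the boundary of an `(n-2)`-simplex: every proper
subset of the maximal vertices has a common lower bound in `Rev_n(1,n)`, but the full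
set does not. (The maximal vertices are indexed by `Fin (n-1)`.) -/
theorem nerve_is_boundary_of_simplex (n : ℕ) (hn : 3 ≤ n) :
    (∀ S : Finset (Fin (n - 1)), S ≠ Finset.univ →
      ∃ τ ∈ revSetFirstLast n (by omega), ∀ k ∈ S,
        weakBruhat n τ (vmax n (k : ℕ) (by have := k.isLt; omega))) ∧
    ¬(∃ τ ∈ revSetFirstLast n (by omega), ∀ k : Fin (n - 1),
        weakBruhat n τ (vmax n (k : ℕ) (by have := k.isLt; omega))) := by
  constructor
  · intro S hS
    haveI : NeZero n := ⟨by omega⟩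
    obtain ⟨i, hi⟩ : ∃ i : Fin (n - 1), i ∉ S := by
      by_contra h
      push_neg at h
      exact hS (Finset.eq_univ_iff_forall.mpr h)
    have hin : (i : ℕ) < n - 1 := i.isLt
    obtain ⟨c, hc⟩ : ∃ c : Fin n, c.val = n - 1 - ↑i := ⟨⟨n - 1 - ↑i, by omega⟩, rfl⟩
    have hτ : ∀ x : Fin n, ((Equiv.addRight c) x).val = (x.val + (n - 1 - ↑i)) % n := by
      intro x; simp [Fin.val_add, hc]
    have hmod : ∀ a : ℕ, a < n → (a + (n - 1 - ↑i)) % n =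
        if a + (n - 1 - ↑i) < n then a + (n - 1 - ↑i) else a + (n - 1 - ↑i) - n := by
      intro a ha
      split_ifs with h
      · exact Nat.mod_eq_of_lt h
      · rw [Nat.mod_eq_sub_mod (by omega), Nat.mod_eq_of_lt (by omega)]
    have fact1 : Equiv.addRight c ≠ 1 := by
      intro h
      have e : (Equiv.addRight c) ⟨0, by omega⟩ = (⟨0, by omega⟩ : Fin n) :=
        (Equiv.ext_iff.mp h ⟨0, by omega⟩).trans (Equiv.Perm.one_apply _)
      have h0 : (0 + (n - 1 - ↑i)) % n = 0 := (hτ ⟨0, by omega⟩).symm.trans (congrArg Fin.val e)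
      rw [hmod 0 (by omega), if_pos (by omega)] at h0
      omega
    have fact2 : Equiv.addRight c ≠ Fin.revPerm := by
      intro h
      have e0 : (Equiv.addRight c) ⟨0, by omega⟩ = (⟨0, by omega⟩ : Fin n).rev :=
        Equiv.ext_iff.mp h ⟨0, by omega⟩
      have e1 : (Equiv.addRight c) ⟨n - 1, by omega⟩ = (⟨n - 1, by omega⟩ : Fin n).rev :=
        Equiv.ext_iff.mp h ⟨n - 1, by omega⟩
      have h0 : (0 + (n - 1 - ↑i)) % n = n - (0 + 1) :=
        (hτ ⟨0, by omega⟩).symm.trans ((congrArg Fin.val e0).trans (Fin.val_rev _))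
      have h1 : ((n - 1) + (n - 1 - ↑i)) % n = n - ((n - 1) + 1) :=
        (hτ ⟨n - 1, by omega⟩).symm.trans ((congrArg Fin.val e1).trans (Fin.val_rev _))
      rw [hmod 0 (by omega), if_pos (by omega)] at h0
      rw [hmod (n - 1) (by omega), if_neg (by omega)] at h1
      omega
    have fact3 : (Equiv.addRight c) ⟨n - 1, by omega⟩ < (Equiv.addRight c) ⟨0, by omega⟩ := by
      rw [Fin.lt_def, hτ, hτ]
      show ((n - 1) + (n - 1 - ↑i)) % n < (0 + (n - 1 - ↑i)) % n
      rw [hmod 0 (by omega), if_pos (by omega), hmod (n - 1) (by omega), if_neg (by omega)]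
      omega
    have fact4 : ∀ k ∈ S, weakBruhat n (Equiv.addRight c)
        (vmax n (k : ℕ) (by have := k.isLt; omega)) := by
      intro k hkS p q hpq hlt
      have hki : (k : ℕ) ≠ (i : ℕ) := by
        intro h
        exact hi (by rwa [show k = i from Fin.ext h] at hkS)
      have hpq' : p.val < q.val := hpq
      rw [Fin.lt_def, hτ, hτ, hmod _ q.isLt, hmod _ p.isLt] at hlt
      have hp : p.val + (n - 1 - ↑i) < n ∧ n ≤ q.val + (n - 1 - ↑i) := by
        split_ifs at hlt <;> omega
      have hkn : (k : ℕ) < n - 1 := k.isLt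
      clear hlt hτ hmod hc hi hS
      simp only [vmax, Equiv.Perm.mul_apply, Fin.revPerm_apply, Fin.rev_lt_rev]
      simp only [Equiv.swap_apply_def]
      split_ifs <;> simp_all only [Fin.lt_def, Fin.ext_iff, Fin.val_mk] <;> omega
    exact ⟨Equiv.addRight c, ⟨fact1, fact2, fact3⟩, fact4⟩
  · rintro ⟨τ, ⟨h1, h2, h3⟩, hall⟩
    have step : ∀ m (hm : m + 1 < n), τ ⟨m, by omega⟩ < τ ⟨m + 1, hm⟩ := by
      intro m hm
      have h : weakBruhat n τ (vmax n m hm) := hall ⟨m, by omega⟩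
      by_contra hcon
      push_neg at hcon
      have hne : τ ⟨m + 1, hm⟩ ≠ τ ⟨m, by omega⟩ := by
        intro he
        have hv : m + 1 = m := congrArg Fin.val (τ.injective he)
        omega
      have hlt : τ ⟨m + 1, hm⟩ < τ ⟨m, by omega⟩ := lt_of_le_of_ne hcon hne
      have key := h ⟨m, by omega⟩ ⟨m + 1, hm⟩ (by rw [Fin.lt_def]; exact Nat.lt_succ_self m) hlt
      simp only [vmax, Equiv.Perm.mul_apply, Equiv.swap_apply_left, Equiv.swap_apply_right,
        Fin.revPerm_apply, Fin.lt_def, Fin.val_rev, Fin.val_mk] at key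
      omega
    have chain : ∀ m (hm : m < n), τ ⟨0, by omega⟩ ≤ τ ⟨m, hm⟩ := by
      intro m
      induction m with
      | zero => intro _; exact le_refl _
      | succ m ih => intro hm; exact le_trans (ih (by omega)) (le_of_lt (step m hm))
    exact absurd h3 (not_lt.mpr (chain (n - 1) (by omega)))
end

section
/- In the poset (B_n, ≤) with the prefix order, any two elements have a common upper bound: for all x, y ∈ B_n there exists z with x ≤ z and y ≤ z. In particular, for every x ∈ B_n there is k > 0 with x ≤ Δ^{2k}. -/
namespace BraidAux

variable {n : ℕ}

lemma rel_eq_one {r : FreeGroup (Fin (n-1))} (h : r ∈ braidRels n) :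
    PresentedGroup.mk (braidRels n) r = 1 :=
  (QuotientGroup.eq_one_iff r).2 (Subgroup.subset_normalClosure h)

lemma sgen_eq (i : Fin (n-1)) : sgen n i = PresentedGroup.mk (braidRels n) (FreeGroup.of i) := rfl

lemma braid_rel_fin (i j : Fin (n-1)) (h : (i:ℕ) + 1 = j) :
    sgen n i * sgen n j * sgen n i = sgen n j * sgen n i * sgen n j := by
  have h1 := rel_eq_one (n := n) (Or.inl ⟨i, j, h, rfl⟩)
  simp only [map_mul, map_inv, mul_inv_eq_one] at h1
  simpa [sgen_eq] using h1

lemma comm_rel_fin (i j : Fin (n-1)) (h : (i:ℕ) + 1 < j) :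
    sgen n i * sgen n j = sgen n j * sgen n i := by
  have h1 := rel_eq_one (n := n) (Or.inr ⟨i, j, h, rfl⟩)
  simp only [map_mul, map_inv, mul_inv_eq_one] at h1
  simpa [sgen_eq] using h1

lemma sgen'_mem (i : ℕ) : sgen' n i ∈ posMonoid n := by
  unfold sgen'
  split
  · exact Submonoid.subset_closure ⟨_, rfl⟩
  · exact one_mem _

lemma braid_rel (i : ℕ) (h : i + 1 < n - 1) :
    sgen' n i * sgen' n (i+1) * sgen' n i = sgen' n (i+1) * sgen' n i * sgen' n (i+1) := by
  have hi : i < n - 1 := by omega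
  have e1 : sgen' n i = sgen n ⟨i, hi⟩ := dif_pos hi
  have e2 : sgen' n (i+1) = sgen n ⟨i+1, h⟩ := dif_pos h
  rw [e1, e2]
  exact braid_rel_fin ⟨i, hi⟩ ⟨i+1, h⟩ rfl

lemma comm_rel (i j : ℕ) (h : i + 2 ≤ j) :
    sgen' n i * sgen' n j = sgen' n j * sgen' n i := by
  by_cases hj : j < n - 1
  · have hi : i < n - 1 := by omega
    have e1 : sgen' n i = sgen n ⟨i, hi⟩ := dif_pos hi
    have e2 : sgen' n j = sgen n ⟨j, hj⟩ := dif_pos hj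
    rw [e1, e2]
    exact comm_rel_fin ⟨i, hi⟩ ⟨j, hj⟩ (by simp; omega)
  · have e : sgen' n j = 1 := dif_neg hj
    rw [e, mul_one, one_mul]

/-- `dlt n k = s₀ s₁ ⋯ s_{k-1}`. -/
def dlt (n k : ℕ) : BraidGroup n := ((List.range k).map (sgen' n)).prod

def HT (n k : ℕ) : BraidGroup n := (((List.range k).reverse).map (fun m => dlt n (m+1))).prod

lemma halfTwist_eq : halfTwist n = HT n (n-1) := rfl

lemma dlt_zero : dlt n 0 = 1 := rfl

lemma dlt_succ (k : ℕ) : dlt n (k+1) = dlt n k * sgen' n k := by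
  simp [dlt, List.range_succ]

lemma dlt_one : dlt n 1 = sgen' n 0 := by
  rw [dlt_succ, dlt_zero, one_mul]

lemma HT_zero : HT n 0 = 1 := rfl

lemma HT_succ (k : ℕ) : HT n (k+1) = dlt n (k+1) * HT n k := by
  simp [HT, List.range_succ]

lemma dlt_mem (k : ℕ) : dlt n k ∈ posMonoid n := by
  refine Submonoid.list_prod_mem _ ?_
  intro x hx
  simp only [List.mem_map] at hx
  obtain ⟨i, -, rfl⟩ := hx
  exact sgen'_mem i

lemma HT_mem (k : ℕ) : HT n k ∈ posMonoid n := by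
  refine Submonoid.list_prod_mem _ ?_
  intro x hx
  simp only [List.mem_map] at hx
  obtain ⟨i, -, rfl⟩ := hx
  exact dlt_mem _

lemma halfTwist_mem : halfTwist n ∈ posMonoid n := by
  rw [halfTwist_eq]; exact HT_mem _

/-- `dlt m` commutes with `s_j` for `j ≥ m+1`. -/
lemma comm_dlt (m j : ℕ) (h : m + 1 ≤ j) :
    dlt n m * sgen' n j = sgen' n j * dlt n m := by
  induction m with
  | zero => rw [dlt_zero, mul_one, one_mul]
  | succ m ih =>
    calc dlt n (m+1) * sgen' n j = dlt n m * (sgen' n m * sgen' n j) := by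
          rw [dlt_succ]; group
      _ = dlt n m * (sgen' n j * sgen' n m) := by rw [comm_rel m j (by omega)]
      _ = (dlt n m * sgen' n j) * sgen' n m := by group
      _ = (sgen' n j * dlt n m) * sgen' n m := by rw [ih (by omega)]
      _ = sgen' n j * dlt n (m+1) := by rw [dlt_succ]; group

/-- `HT m` commutes with `s_j` for `j ≥ m+1`. -/
lemma comm_HT (m j : ℕ) (h : m + 1 ≤ j) :
    HT n m * sgen' n j = sgen' n j * HT n m := by
  induction m with
  | zero => rw [HT_zero, mul_one, one_mul]
  | succ m ih =>
    calc HT n (m+1) * sgen' n j = dlt n (m+1) * (HT n m * sgen' n j) := by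
          rw [HT_succ]; group
      _ = dlt n (m+1) * (sgen' n j * HT n m) := by rw [ih (by omega)]
      _ = (dlt n (m+1) * sgen' n j) * HT n m := by group
      _ = (sgen' n j * dlt n (m+1)) * HT n m := by rw [comm_dlt (m+1) j (by omega)]
      _ = sgen' n j * HT n (m+1) := by rw [HT_succ]; group

/-- Conjugation: `dlt k * s_j = s_{j+1} * dlt k` for `j + 1 < k ≤ n-1`. -/
lemma conj_dlt (k j : ℕ) (hj : j + 1 < k) (hk : k ≤ n - 1) :
    dlt n k * sgen' n j = sgen' n (j+1) * dlt n k := by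
  induction k with
  | zero => omega
  | succ k ih =>
    rcases Nat.lt_or_ge (j+1) k with h | h
    · calc dlt n (k+1) * sgen' n j = dlt n k * (sgen' n k * sgen' n j) := by
            rw [dlt_succ]; group
        _ = dlt n k * (sgen' n j * sgen' n k) := by rw [← comm_rel j k (by omega)]
        _ = (dlt n k * sgen' n j) * sgen' n k := by group
        _ = (sgen' n (j+1) * dlt n k) * sgen' n k := by rw [ih h (by omega)]
        _ = sgen' n (j+1) * dlt n (k+1) := by rw [dlt_succ]; group
    · have hk' : k = j + 1 := by omega
      subst hk'
      calc dlt n (j+1+1) * sgen' n j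
          = dlt n j * (sgen' n j * sgen' n (j+1) * sgen' n j) := by
            rw [dlt_succ, dlt_succ]; group
        _ = dlt n j * (sgen' n (j+1) * sgen' n j * sgen' n (j+1)) := by
            rw [braid_rel j (by omega)]
        _ = (dlt n j * sgen' n (j+1)) * (sgen' n j * sgen' n (j+1)) := by group
        _ = (sgen' n (j+1) * dlt n j) * (sgen' n j * sgen' n (j+1)) := by
            rw [comm_dlt j (j+1) le_rfl]
        _ = sgen' n (j+1) * dlt n (j+1+1) := by rw [dlt_succ, dlt_succ]; group

/-- `dlt (k+1) * dlt k * s_k = s_0 * (dlt (k+1) * dlt k)`. -/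
lemma G_lemma (k : ℕ) (hk : k + 1 ≤ n - 1) :
    dlt n (k+1) * dlt n k * sgen' n k = sgen' n 0 * (dlt n (k+1) * dlt n k) := by
  induction k with
  | zero => simp [dlt_zero, dlt_one]
  | succ k ih =>
    calc dlt n (k+2) * dlt n (k+1) * sgen' n (k+1)
        = dlt n (k+1) * (sgen' n (k+1) * dlt n k) * (sgen' n k * sgen' n (k+1)) := by
          rw [dlt_succ (k+1), dlt_succ k]; group
      _ = dlt n (k+1) * (dlt n k * sgen' n (k+1)) * (sgen' n k * sgen' n (k+1)) := by
          rw [comm_dlt k (k+1) le_rfl]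
      _ = dlt n (k+1) * dlt n k * (sgen' n (k+1) * sgen' n k * sgen' n (k+1)) := by
          group
      _ = dlt n (k+1) * dlt n k * (sgen' n k * sgen' n (k+1) * sgen' n k) := by
          rw [← braid_rel k (by omega)]
      _ = (dlt n (k+1) * dlt n k * sgen' n k) * (sgen' n (k+1) * sgen' n k) := by
          group
      _ = sgen' n 0 * (dlt n (k+1) * dlt n k) * (sgen' n (k+1) * sgen' n k) := by
          rw [ih (by omega)]
      _ = sgen' n 0 * (dlt n (k+1) * (dlt n k * sgen' n (k+1)) * sgen' n k) := by
          group
      _ = sgen' n 0 * (dlt n (k+1) * (sgen' n (k+1) * dlt n k) * sgen' n k) := by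
          rw [comm_dlt k (k+1) le_rfl]
      _ = sgen' n 0 * (dlt n (k+2) * dlt n (k+1)) := by
          rw [dlt_succ (k+1), dlt_succ k]; group

/-- Flip: `HT k * s_i = s_{k-1-i} * HT k` for `i < k ≤ n-1`. -/
lemma flip (k : ℕ) (hk : k ≤ n - 1) (i : ℕ) (hi : i < k) :
    HT n k * sgen' n i = sgen' n (k-1-i) * HT n k := by
  induction k generalizing i with
  | zero => omega
  | succ k ih =>
    rcases Nat.lt_or_ge i k with h | h
    · have e : k + 1 - 1 - i = (k - 1 - i) + 1 := by omega
      rw [e]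
      calc HT n (k+1) * sgen' n i = dlt n (k+1) * (HT n k * sgen' n i) := by
            rw [HT_succ]; group
        _ = dlt n (k+1) * (sgen' n (k-1-i) * HT n k) := by rw [ih (by omega) i h]
        _ = (dlt n (k+1) * sgen' n (k-1-i)) * HT n k := by group
        _ = (sgen' n (k-1-i+1) * dlt n (k+1)) * HT n k := by
            rw [conj_dlt (k+1) (k-1-i) (by omega) hk]
        _ = sgen' n (k-1-i+1) * HT n (k+1) := by rw [HT_succ]; group
    · have hik : i = k := by omega
      subst hik
      have e : i + 1 - 1 - i = 0 := by omega
      rw [e]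
      match i, hk with
      | 0, hk => simp [HT_succ, HT_zero, dlt_one]
      | Nat.succ m, hk =>
        calc HT n (m+2) * sgen' n (m+1)
            = dlt n (m+2) * dlt n (m+1) * (HT n m * sgen' n (m+1)) := by
              rw [HT_succ, HT_succ]; group
          _ = dlt n (m+2) * dlt n (m+1) * (sgen' n (m+1) * HT n m) := by
              rw [comm_HT m (m+1) le_rfl]
          _ = (dlt n (m+2) * dlt n (m+1) * sgen' n (m+1)) * HT n m := by group
          _ = (sgen' n 0 * (dlt n (m+2) * dlt n (m+1))) * HT n m := by
              rw [G_lemma (m+1) (by omega)]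
          _ = sgen' n 0 * HT n (m+2) := by rw [HT_succ, HT_succ]; group

lemma flip_flip (i : ℕ) :
    halfTwist n * (halfTwist n * sgen' n i) = sgen' n i * (halfTwist n * halfTwist n) := by
  by_cases hi : i < n - 1
  · have e : n - 1 - 1 - (n - 1 - 1 - i) = i := by omega
    rw [halfTwist_eq, flip (n-1) le_rfl i hi, ← mul_assoc,
      flip (n-1) le_rfl (n-1-1-i) (by omega), e, mul_assoc]
  · have e : sgen' n i = 1 := dif_neg hi
    rw [e, mul_one, one_mul]

lemma sgen_eq_sgen' (i : Fin (n-1)) : sgen n i = sgen' n i.val := by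
  rw [sgen', dif_pos i.isLt]

lemma generated (x : BraidGroup n) : x ∈ Subgroup.closure (Set.range (sgen n)) := by
  have h1 : Set.range (sgen n) = Set.range (PresentedGroup.of (rels := braidRels n)) := rfl
  rw [h1, PresentedGroup.closure_range_of]
  trivial

lemma sq_commute (x : BraidGroup n) : Commute (halfTwist n ^ 2) x := by
  induction generated x using Subgroup.closure_induction with
  | mem y hy =>
    obtain ⟨i, rfl⟩ := hy
    rw [sgen_eq_sgen' i]
    unfold Commute SemiconjBy
    calc halfTwist n ^ 2 * sgen' n i.val
        = halfTwist n * (halfTwist n * sgen' n i.val) := by rw [pow_two, mul_assoc]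
      _ = sgen' n i.val * (halfTwist n * halfTwist n) := flip_flip i.val
      _ = sgen' n i.val * halfTwist n ^ 2 := by rw [pow_two]
  | one => exact Commute.one_right _
  | mul y z hy hz ihy ihz => exact ihy.mul_right ihz
  | inv y hy ihy => exact ihy.inv_right

lemma pow_commute (k : ℕ) (x : BraidGroup n) : Commute (halfTwist n ^ (2*k)) x := by
  rw [pow_mul]
  exact (sq_commute x).pow_left k

lemma step_lemma (k l : ℕ) (A B : BraidGroup n) :
    halfTwist n ^ (2*(k+l)) * (A * B)
      = (halfTwist n ^ (2*k) * A) * (halfTwist n ^ (2*l) * B) := by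
  rw [show 2*(k+l) = 2*k + 2*l by ring, pow_add, mul_assoc,
    ← mul_assoc (halfTwist n ^ (2*l)), (pow_commute l A).eq, mul_assoc A, ← mul_assoc]

/-- `HT k` admits a positive expression beginning with `s_i`, for each `i < k ≤ n-1`. -/
lemma HT_starts (k : ℕ) (hk : k ≤ n - 1) (i : ℕ) (hi : i < k) :
    ∃ p ∈ posMonoid n, HT n k = sgen' n i * p := by
  induction k generalizing i with
  | zero => omega
  | succ k ih =>
    match i, hi with
    | 0, hi =>
      refine ⟨((List.range k).map (fun i => sgen' n (i+1))).prod * HT n k, ?_, ?_⟩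
      · refine mul_mem (Submonoid.list_prod_mem _ ?_) (HT_mem k)
        intro x hx
        simp only [List.mem_map] at hx
        obtain ⟨j, -, rfl⟩ := hx
        exact sgen'_mem _
      · rw [HT_succ, ← mul_assoc]
        congr 1
        rw [dlt, List.range_succ_eq_map]
        simp [List.map_map, Function.comp_def]
    | Nat.succ m, hi =>
      obtain ⟨p, hp, he⟩ := ih (by omega) m (by omega)
      refine ⟨dlt n (k+1) * p, mul_mem (dlt_mem _) hp, ?_⟩
      rw [HT_succ, he, ← mul_assoc, conj_dlt (k+1) m (by omega) hk, mul_assoc]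

lemma key (i : ℕ) : (sgen' n i)⁻¹ * halfTwist n ∈ posMonoid n := by
  by_cases hi : i < n - 1
  · obtain ⟨p, hp, he⟩ := HT_starts (n := n) (n-1) le_rfl i hi
    rw [halfTwist_eq, he, ← mul_assoc, inv_mul_cancel, one_mul]
    exact hp
  · have e : sgen' n i = 1 := dif_neg hi
    rw [e, inv_one, one_mul]
    exact halfTwist_mem


lemma inv_pos {p : BraidGroup n} (hp : p ∈ posMonoid n) :
    ∃ m : ℕ, halfTwist n ^ (2*m) * p⁻¹ ∈ posMonoid n := by
  induction hp using Submonoid.closure_induction with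
  | mem y hy =>
    obtain ⟨i, rfl⟩ := hy
    refine ⟨1, ?_⟩
    rw [sgen_eq_sgen' i, (pow_commute 1 ((sgen' n i.val)⁻¹)).eq,
      show halfTwist n ^ (2*1) = halfTwist n * halfTwist n by
        rw [pow_mul, pow_one, pow_two],
      ← mul_assoc]
    exact mul_mem (key i.val) halfTwist_mem
  | one => exact ⟨0, by simpa using (one_mem (posMonoid n))⟩
  | mul y z hy hz ihy ihz =>
    obtain ⟨k, hk⟩ := ihz
    obtain ⟨l, hl⟩ := ihy
    refine ⟨k + l, ?_⟩
    rw [mul_inv_rev, step_lemma k l]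
    exact mul_mem hk hl

lemma main (y : BraidGroup n) : ∃ k : ℕ, halfTwist n ^ (2*k) * y ∈ posMonoid n := by
  induction generated y using Subgroup.closure_induction with
  | mem y hy =>
    obtain ⟨i, rfl⟩ := hy
    refine ⟨0, ?_⟩
    simp only [Nat.mul_zero, pow_zero, one_mul]
    exact Submonoid.subset_closure ⟨i, rfl⟩
  | one => exact ⟨0, by simpa using (one_mem (posMonoid n))⟩
  | mul y z hy hz ihy ihz =>
    obtain ⟨k, hk⟩ := ihy
    obtain ⟨l, hl⟩ := ihz
    refine ⟨k + l, ?_⟩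
    rw [step_lemma k l]
    exact mul_mem hk hl
  | inv y hy ihy =>
    obtain ⟨k, hk⟩ := ihy
    obtain ⟨m, hm⟩ := inv_pos hk
    refine ⟨m + k, ?_⟩
    have e : y⁻¹ = (halfTwist n ^ (2*k) * y)⁻¹ * halfTwist n ^ (2*k) := by group
    rw [e, show 2*(m+k) = 2*m + 2*k by ring, pow_add, mul_assoc,
      ← mul_assoc (halfTwist n ^ (2*k)),
      (pow_commute k ((halfTwist n ^ (2*k) * y)⁻¹)).eq, mul_assoc, ← pow_add,
      ← mul_assoc]
    exact mul_mem hm (pow_mem halfTwist_mem _)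


lemma pow_mem_pos (k : ℕ) : halfTwist n ^ k ∈ posMonoid n :=
  pow_mem halfTwist_mem k

lemma le_pow (x : BraidGroup n) : ∃ k : ℕ, 0 < k ∧ braidLe n x (halfTwist n ^ (2*k)) := by
  obtain ⟨k, hk⟩ := main (n := n) x⁻¹
  refine ⟨k + 1, Nat.succ_pos k, ?_⟩
  unfold braidLe
  rw [← (pow_commute (k+1) x⁻¹).eq,
    show halfTwist n ^ (2*(k+1)) = halfTwist n * halfTwist n * halfTwist n ^ (2*k) by
      rw [show 2*(k+1) = 1 + 1 + 2*k by ring, pow_add, pow_add, pow_one],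
    mul_assoc]
  exact mul_mem (mul_mem halfTwist_mem halfTwist_mem) hk

end BraidAux

/-- the prefix order on `B_n` is directed: any two elements have a common
upper bound; in particular every `x ∈ B_n` satisfies `x ≤ Δ^{2k}` for some `k > 0`. -/
theorem braidLe_directed (n : ℕ) :
    (∀ x y : BraidGroup n, ∃ z : BraidGroup n, braidLe n x z ∧ braidLe n y z) ∧
    (∀ x : BraidGroup n, ∃ k : ℕ, 0 < k ∧ braidLe n x ((halfTwist n) ^ (2 * k))) := by
  constructor
  · intro x y
    obtain ⟨k, -, hk⟩ := BraidAux.le_pow (n := n) x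
    obtain ⟨l, -, hl⟩ := BraidAux.le_pow (n := n) y
    refine ⟨halfTwist n ^ (2*(k+l)), ?_, ?_⟩
    · unfold braidLe at *
      rw [show 2*(k+l) = 2*k + 2*l by ring, pow_add, ← mul_assoc]
      exact mul_mem hk (BraidAux.pow_mem_pos _)
    · unfold braidLe at *
      rw [show 2*(k+l) = 2*l + 2*k by ring, pow_add, ← mul_assoc]
      exact mul_mem hl (BraidAux.pow_mem_pos _)
  · exact BraidAux.le_pow
end

section
/- Let f : P → P be the map on the open interval (1, p) in the positive braid monoid (prefix order) given by q ↦ q ∧ Δ, where q ∧ Δ is the greatest lower bound of q and Δ. If p ∈ B_n^+ with p ≰ Δ, then for every q ∈ (1, p): (a) f(q) ∈ (1, p), i.e., 1 < q ∧ Δ < p; (b) f(q) ≤ q; and (c) f(q) ≤ p ∧ Δ, with p ∧ Δ ∈ (1, p). -/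
/-- Strict prefix order: `x < y`. -/
def braidLt (n : ℕ) (x y : BraidGroup n) : Prop := braidLe n x y ∧ x ≠ y

/-- `m` is the greatest lower bound (meet) `a ∧ b` of `a` and `b` in the prefix order. -/
def isMeet (n : ℕ) (a b m : BraidGroup n) : Prop :=
  braidLe n m a ∧ braidLe n m b ∧ ∀ r : BraidGroup n, braidLe n r a → braidLe n r b → braidLe n r m

section Relations

variable {n : ℕ}

lemma mk_eq_one_of_mem_braidRels {r : FreeGroup (Fin (n - 1))} (hr : r ∈ braidRels n) :
    PresentedGroup.mk (braidRels n) r = 1 :=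
  (QuotientGroup.eq_one_iff _).2 (Subgroup.subset_normalClosure hr)

lemma sgen_braid_rel (i j : Fin (n - 1)) (h : (i : ℕ) + 1 = j) :
    sgen n i * sgen n j * sgen n i = sgen n j * sgen n i * sgen n j := by
  have hrel := mk_eq_one_of_mem_braidRels (n := n) (Or.inl ⟨i, j, h, rfl⟩)
  simp only [map_mul, map_inv, mul_inv_eq_one] at hrel
  exact hrel

lemma sgen_comm (i j : Fin (n - 1)) (h : (i : ℕ) + 1 < j) :
    sgen n i * sgen n j = sgen n j * sgen n i := by
  have hrel := mk_eq_one_of_mem_braidRels (n := n) (Or.inr ⟨i, j, h, rfl⟩)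
  simp only [map_mul, map_inv, mul_inv_eq_one] at hrel
  exact hrel

lemma sgen'_braid_rel (j : ℕ) (h : j + 1 < n - 1) :
    sgen' n j * sgen' n (j + 1) * sgen' n j
      = sgen' n (j + 1) * sgen' n j * sgen' n (j + 1) := by
  have hj : j < n - 1 := by omega
  simp only [sgen', dif_pos h, dif_pos hj]
  exact sgen_braid_rel ⟨j, hj⟩ ⟨j + 1, h⟩ rfl

lemma sgen'_comm (j k : ℕ) (hjk : j + 2 ≤ k) (hk : k < n - 1) :
    sgen' n j * sgen' n k = sgen' n k * sgen' n j := by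
  have hj : j < n - 1 := by omega
  simp only [sgen', dif_pos hj, dif_pos hk]
  exact sgen_comm ⟨j, hj⟩ ⟨k, hk⟩ (by simp only; omega)

end Relations

section PositiveBraids

variable {n : ℕ}

lemma braidLe_one_iff {x : BraidGroup n} : braidLe n 1 x ↔ x ∈ posMonoid n := by
  simp only [braidLe, inv_one, one_mul]

lemma braidLe_iff {x y : BraidGroup n} : braidLe n x y ↔ ∃ w ∈ posMonoid n, y = x * w :=
  ⟨fun h => ⟨_, h, (mul_inv_cancel_left x y).symm⟩, by
    rintro ⟨w, hw, rfl⟩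
    rwa [braidLe, inv_mul_cancel_left]⟩

lemma braidLe_trans {x y z : BraidGroup n} (hxy : braidLe n x y) (hyz : braidLe n y z) :
    braidLe n x z := by
  simpa only [braidLe, mul_assoc, mul_inv_cancel_left] using mul_mem hxy hyz

lemma sgen'_mem_posMonoid (i : ℕ) : sgen' n i ∈ posMonoid n := by
  unfold sgen'
  split
  · exact Submonoid.subset_closure ⟨_, rfl⟩
  · exact one_mem _

lemma exists_sgen_braidLe {x : BraidGroup n} (hx : x ∈ posMonoid n) (hx1 : x ≠ 1) :
    ∃ i, braidLe n (sgen n i) x := by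
  obtain ⟨l, hl, rfl⟩ := Submonoid.exists_list_of_mem_closure hx
  cases l with
  | nil => exact absurd List.prod_nil hx1
  | cons y t =>
    obtain ⟨i, rfl⟩ := hl y List.mem_cons_self
    refine ⟨i, ?_⟩
    rw [braidLe, List.prod_cons, inv_mul_cancel_left]
    exact Submonoid.list_prod_mem _ fun z hz =>
      Submonoid.subset_closure (hl z (List.mem_cons_of_mem _ hz))

-- Well defined because each braid relation has words of equal length on both sides.
def exponentSum (n : ℕ) : BraidGroup n →* Multiplicative ℤ :=
  PresentedGroup.toGroup (f := fun _ => Multiplicative.ofAdd 1) (by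
    rintro r (⟨i, j, -, rfl⟩ | ⟨i, j, -, rfl⟩) <;>
    · simp only [map_mul, map_inv, FreeGroup.lift_apply_of]
      group)

lemma exponentSum_sgen (i : Fin (n - 1)) : exponentSum n (sgen n i) = Multiplicative.ofAdd 1 :=
  PresentedGroup.toGroup.of _

lemma exponentSum_nonneg {x : BraidGroup n} (hx : x ∈ posMonoid n) :
    0 ≤ Multiplicative.toAdd (exponentSum n x) := by
  induction hx using Submonoid.closure_induction with
  | mem x hx =>
    obtain ⟨i, rfl⟩ := hx
    simp only [exponentSum_sgen, toAdd_ofAdd, zero_le_one]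
  | one => simp
  | mul x y _ _ hx hy => rw [map_mul, toAdd_mul]; omega

lemma sgen_inv_notMem_posMonoid (i : Fin (n - 1)) : (sgen n i)⁻¹ ∉ posMonoid n := fun h => by
  simpa [exponentSum_sgen] using exponentSum_nonneg h

end PositiveBraids

section HalfTwist

variable {n : ℕ}

variable (n) in
def risingProd (m : ℕ) : BraidGroup n := ((List.range m).map (sgen' n)).prod

-- The half twist of the first `m + 1` strands.
variable (n) in
def partialHalfTwist (m : ℕ) : BraidGroup n :=
  (((List.range m).reverse).map (fun k => risingProd n (k + 1))).prod

lemma risingProd_succ (m : ℕ) : risingProd n (m + 1) = risingProd n m * sgen' n m := by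
  simp [risingProd, List.range_succ]

lemma partialHalfTwist_succ (m : ℕ) :
    partialHalfTwist n (m + 1) = risingProd n (m + 1) * partialHalfTwist n m := by
  simp [partialHalfTwist, List.range_succ]

lemma risingProd_mem_posMonoid (m : ℕ) : risingProd n m ∈ posMonoid n :=
  Submonoid.list_prod_mem _ (by simp [sgen'_mem_posMonoid])

lemma partialHalfTwist_mem_posMonoid (m : ℕ) : partialHalfTwist n m ∈ posMonoid n :=
  Submonoid.list_prod_mem _ (by simp [risingProd_mem_posMonoid])

lemma sgen'_zero_braidLe_risingProd (m : ℕ) : braidLe n (sgen' n 0) (risingProd n (m + 1)) := by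
  induction m with
  | zero => simp [risingProd, braidLe]
  | succ m ih =>
    obtain ⟨w, hw, hprod⟩ := braidLe_iff.1 ih
    exact braidLe_iff.2 ⟨w * sgen' n (m + 1), mul_mem hw (sgen'_mem_posMonoid _), by
      rw [risingProd_succ (m + 1), hprod, mul_assoc]⟩

lemma sgen'_mul_risingProd_of_lt {k : ℕ} (hk : k < n - 1) {m : ℕ} (hmk : m < k) :
    sgen' n k * risingProd n m = risingProd n m * sgen' n k := by
  induction m with
  | zero => simp [risingProd]
  | succ m ih =>
    rw [risingProd_succ, ← mul_assoc, ih (by omega), mul_assoc,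
      ← sgen'_comm m k (by omega) hk, mul_assoc]

lemma sgen'_mul_risingProd {i m : ℕ} (hi : 1 ≤ i) (him : i < m) (hm : m ≤ n - 1) :
    sgen' n i * risingProd n m = risingProd n m * sgen' n (i - 1) := by
  induction m with
  | zero => omega
  | succ m ih =>
    rcases Nat.lt_or_ge i m with h | h
    · rw [risingProd_succ, ← mul_assoc, ih h (by omega), mul_assoc,
        sgen'_comm (i - 1) m (by omega) (by omega), ← mul_assoc]
    · obtain ⟨j, rfl, rfl⟩ : ∃ j, i = j + 1 ∧ m = j + 1 := ⟨i - 1, by omega, by omega⟩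
      have hcomm := sgen'_mul_risingProd_of_lt (n := n) (k := j + 1) (by omega)
        (m := j) (by omega)
      calc sgen' n (j + 1) * risingProd n (j + 1 + 1)
          = (sgen' n (j + 1) * risingProd n j) * (sgen' n j * sgen' n (j + 1)) := by
            simp only [risingProd_succ, mul_assoc]
        _ = risingProd n j * (sgen' n (j + 1) * sgen' n j * sgen' n (j + 1)) := by
            rw [hcomm]; simp only [mul_assoc]
        _ = risingProd n j * (sgen' n j * sgen' n (j + 1) * sgen' n j) := by
            rw [sgen'_braid_rel j (by omega)]
        _ = risingProd n (j + 1 + 1) * sgen' n (j + 1 - 1) := by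
            simp only [risingProd_succ, mul_assoc, Nat.add_sub_cancel]

lemma sgen'_braidLe_partialHalfTwist {m : ℕ} (hm : m ≤ n - 1) {i : ℕ} (him : i < m) :
    braidLe n (sgen' n i) (partialHalfTwist n m) := by
  induction m generalizing i with
  | zero => omega
  | succ m ih =>
    rcases Nat.eq_zero_or_pos i with rfl | hi
    · obtain ⟨w, hw, hprod⟩ := braidLe_iff.1 (sgen'_zero_braidLe_risingProd (n := n) m)
      exact braidLe_iff.2 ⟨w * partialHalfTwist n m,
        mul_mem hw (partialHalfTwist_mem_posMonoid m), by
          rw [partialHalfTwist_succ, hprod, mul_assoc]⟩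
    · obtain ⟨w, hw, htwist⟩ := braidLe_iff.1 (ih (by omega) (i := i - 1) (by omega))
      exact braidLe_iff.2 ⟨risingProd n (m + 1) * w,
        mul_mem (risingProd_mem_posMonoid _) hw, by
          rw [partialHalfTwist_succ, htwist, ← mul_assoc, ← sgen'_mul_risingProd hi him hm,
            mul_assoc]⟩

lemma halfTwist_eq_partialHalfTwist : halfTwist n = partialHalfTwist n (n - 1) := rfl

lemma one_braidLe_halfTwist : braidLe n 1 (halfTwist n) :=
  braidLe_one_iff.2 (halfTwist_eq_partialHalfTwist ▸ partialHalfTwist_mem_posMonoid (n - 1))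

lemma sgen_braidLe_halfTwist (i : Fin (n - 1)) : braidLe n (sgen n i) (halfTwist n) := by
  have h := sgen'_braidLe_partialHalfTwist (n := n) le_rfl i.isLt
  rwa [sgen', dif_pos i.isLt, ← halfTwist_eq_partialHalfTwist] at h

end HalfTwist

section Meet

variable {n : ℕ} {a b m : BraidGroup n}

lemma isMeet.one_braidLe (hm : isMeet n a b m) (ha : braidLe n 1 a) (hb : braidLe n 1 b) :
    braidLe n 1 m :=
  hm.2.2 1 ha hb

lemma isMeet.mono_left {a' m' : BraidGroup n} (hm : isMeet n a b m) (hm' : isMeet n a' b m')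
    (haa' : braidLe n a a') : braidLe n m m' :=
  hm'.2.2 m (braidLe_trans hm.1 haa') hm.2.1

lemma isMeet.ne_of_not_braidLe {x : BraidGroup n} (hm : isMeet n a b m)
    (hx : ¬ braidLe n x b) : m ≠ x := by
  rintro rfl
  exact hx hm.2.1

lemma isMeet_halfTwist_one_braidLt {x : BraidGroup n} (hx : braidLt n 1 x)
    (hm : isMeet n x (halfTwist n) m) : braidLt n 1 m := by
  obtain ⟨i, hix⟩ := exists_sgen_braidLe (braidLe_one_iff.1 hx.1) hx.2.symm
  have him : braidLe n (sgen n i) m := hm.2.2 _ hix (sgen_braidLe_halfTwist i)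
  refine ⟨hm.one_braidLe hx.1 one_braidLe_halfTwist, ?_⟩
  rintro rfl
  exact sgen_inv_notMem_posMonoid i (by simpa [braidLe] using him)

end Meet

theorem garside_meet_contraction_general (n : ℕ) (p : BraidGroup n)
    (hpΔ : ¬ braidLe n p (halfTwist n))
    (q : BraidGroup n) (hq : braidLt n 1 q ∧ braidLt n q p)
    (mq : BraidGroup n) (hmq : isMeet n q (halfTwist n) mq)
    (mp : BraidGroup n) (hmp : isMeet n p (halfTwist n) mp) :
    (braidLt n 1 mq ∧ braidLt n mq p) ∧
    braidLe n mq q ∧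
    (braidLe n mq mp ∧ braidLt n 1 mp ∧ braidLt n mp p) := by
  obtain ⟨hq1, hqp⟩ := hq
  have hp1 : braidLt n 1 p := ⟨braidLe_trans hq1.1 hqp.1, by
    rintro rfl
    exact hpΔ one_braidLe_halfTwist⟩
  exact ⟨⟨isMeet_halfTwist_one_braidLt hq1 hmq,
      braidLe_trans hmq.1 hqp.1, hmq.ne_of_not_braidLe hpΔ⟩,
    hmq.1,
    hmq.mono_left hmp hqp.1, isMeet_halfTwist_one_braidLt hp1 hmp,
      hmp.1, hmp.ne_of_not_braidLe hpΔ⟩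

/-- let `p ∈ B_n^+` with `p ≰ Δ`, and let `q` lie in the open interval
`(1, p)` of the prefix order. Let `mq = q ∧ Δ` and `mp = p ∧ Δ` be the Garside meets
with the half twist. Then (a) `1 < q ∧ Δ < p`; (b) `q ∧ Δ ≤ q`; and (c) `q ∧ Δ ≤ p ∧ Δ`,
with `p ∧ Δ ∈ (1, p)`. -/
theorem garside_meet_contraction (n : ℕ) (p : BraidGroup n)
    (hp : p ∈ posMonoid n) (hpΔ : ¬ braidLe n p (halfTwist n))
    (q : BraidGroup n) (hq : braidLt n 1 q ∧ braidLt n q p)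
    (mq : BraidGroup n) (hmq : isMeet n q (halfTwist n) mq)
    (mp : BraidGroup n) (hmp : isMeet n p (halfTwist n) mp) :
    (braidLt n 1 mq ∧ braidLt n mq p) ∧
    braidLe n mq q ∧
    (braidLe n mq mp ∧ braidLt n 1 mp ∧ braidLt n mp p) :=
  garside_meet_contraction_general n p hpΔ q hq mq hmq mp hmp
end
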